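/- arXiv:1812.08323 — 3 statements merged into one kernel-verified Lean document; each statement's English description precedes it below -/
import Mathlib

section
/- Let a > 0, s ∈ (0,1), let u : ℝ² → ℝ be four times continuously differentiable, and let x ∈ ℝ². Then there exist C > 0 and δ ∈ (0, a] such that |u(x) − u(y) + ρ_a(|x−y|)·g_x(y)| ≤ C·|x−y|^4 whenever 0 < |y−x| ≤ δ. Consequently, the function y ↦ (u(x) − u(y) + ρ_a(|x−y|)·g_x(y))/|x−y|^{2+2s}, defined for y ≠ x, tends to 0 as y → x, and hence extends to a continuous function on all of ℝ² by assigning it the value 0 at y = x. -/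
open MeasureTheory Set Filter Topology Classical

/-- The window function `ρ_a`. -/
noncomputable def rho (a r : ℝ) : ℝ :=
  if r < a then
    1 - 35 * (r / a) ^ 4 + 84 * (r / a) ^ 5 - 70 * (r / a) ^ 6 + 20 * (r / a) ^ 7
  else 0

/-- Partial derivative of `f` in the `i`-th coordinate direction. -/
noncomputable def pd (i : Fin 2) (f : EuclideanSpace ℝ (Fin 2) → ℝ) :
    EuclideanSpace ℝ (Fin 2) → ℝ :=
  fun x => fderiv ℝ f x (EuclideanSpace.single i 1)

/-- The subtracted (truncated) Taylor polynomial `g_x(y)` of `u(y) − u(x)`,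
up to third order, with `v = y − x`. -/
noncomputable def gsub (u : EuclideanSpace ℝ (Fin 2) → ℝ)
    (x y : EuclideanSpace ℝ (Fin 2)) : ℝ :=
  let v1 := y 0 - x 0
  let v2 := y 1 - x 1
  pd 0 u x * v1 + pd 1 u x * v2
    + pd 0 (pd 0 u) x * v1 ^ 2 / 2 + pd 1 (pd 1 u) x * v2 ^ 2 / 2
    + pd 0 (pd 1 u) x * v1 * v2
    + pd 0 (pd 0 (pd 0 u)) x * v1 ^ 3 / 6
    + pd 1 (pd 0 (pd 0 u)) x * v1 ^ 2 * v2 / 2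
    + pd 1 (pd 1 (pd 0 u)) x * v1 * v2 ^ 2 / 2
    + pd 1 (pd 1 (pd 1 u)) x * v2 ^ 3 / 6

/-- The Laplacian `Δu(x) = u₁₁(x) + u₂₂(x)`. -/
noncomputable def lap (u : EuclideanSpace ℝ (Fin 2) → ℝ)
    (x : EuclideanSpace ℝ (Fin 2)) : ℝ :=
  pd 0 (pd 0 u) x + pd 1 (pd 1 u) x

/-!
Taylor's formula with integral remainder gives
`u y = u x + ∑_{k=1}^{3} D^k u(x)(v,…,v)/k! + O(|v|⁴)` with `v = y - x`. Expanding
`v = v₁e₁ + v₂e₂` and using the symmetry of mixed partials identifies the sum with `g_x(y)`.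
Since `ρ_a(r) = 1 + O(r⁴)` and `g_x` is bounded near `x`, the numerator is `O(|y - x|⁴)`;
dividing by `|y - x|^(2+2s)` leaves `O(|y - x|^(2-2s)) → 0`.
-/

open Asymptotics

section Taylor

variable {E F : Type*} [NormedAddCommGroup E] [NormedSpace ℝ E]
  [NormedAddCommGroup F] [NormedSpace ℝ F]

noncomputable def taylorEval (f : E → F) (n : ℕ) (x₀ x : E) : F :=
  ∑ k ∈ Finset.range (n + 1), (k.factorial : ℝ)⁻¹ • iteratedFDeriv ℝ k f x₀ (fun _ => x - x₀)

theorem norm_taylor_remainder_integral_le [CompleteSpace F] {f : E → F} {n : ℕ} {x v : E} {M : ℝ}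
    (hM : ∀ t ∈ Set.Icc (0 : ℝ) 1, ‖iteratedFDeriv ℝ (n + 1) f (x + t • v)‖ ≤ M) :
    ‖(n.factorial : ℝ)⁻¹ • ∫ t in (0 : ℝ)..1,
        (1 - t) ^ n • iteratedFDeriv ℝ (n + 1) f (x + t • v) (fun _ => v)‖ ≤ M * ‖v‖ ^ (n + 1) := by
  have hpt : ∀ t ∈ Set.uIoc (0 : ℝ) 1,
      ‖(1 - t) ^ n • iteratedFDeriv ℝ (n + 1) f (x + t • v) (fun _ => v)‖ ≤ M * ‖v‖ ^ (n + 1) := by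
    intro t ht
    rw [Set.uIoc_of_le zero_le_one] at ht
    have h1t : |1 - t| ^ n ≤ 1 :=
      pow_le_one₀ (abs_nonneg _) (abs_le.2 ⟨by linarith [ht.2], by linarith [ht.1]⟩)
    calc ‖(1 - t) ^ n • iteratedFDeriv ℝ (n + 1) f (x + t • v) (fun _ => v)‖
        = |1 - t| ^ n * ‖iteratedFDeriv ℝ (n + 1) f (x + t • v) (fun _ => v)‖ := by
          rw [norm_smul, norm_pow, Real.norm_eq_abs]
      _ ≤ 1 * (‖iteratedFDeriv ℝ (n + 1) f (x + t • v)‖ * ∏ _ : Fin (n + 1), ‖v‖) := by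
          gcongr
          exact ContinuousMultilinearMap.le_opNorm _ _
      _ ≤ M * ‖v‖ ^ (n + 1) := by
          rw [one_mul, Finset.prod_const, Finset.card_univ, Fintype.card_fin]
          gcongr
          exact hM t ⟨ht.1.le, ht.2⟩
  calc _ = (n.factorial : ℝ)⁻¹ * ‖∫ t in (0 : ℝ)..1,
        (1 - t) ^ n • iteratedFDeriv ℝ (n + 1) f (x + t • v) (fun _ => v)‖ := by
        rw [norm_smul, norm_inv, RCLike.norm_natCast]
    _ ≤ 1 * (M * ‖v‖ ^ (n + 1) * |1 - 0|) := by
        gcongr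
        · exact inv_le_one_of_one_le₀ (mod_cast n.factorial_pos)
        · exact intervalIntegral.norm_integral_le_of_norm_le_const hpt
    _ = M * ‖v‖ ^ (n + 1) := by simp

theorem ContDiffAt.isBigO_sub_taylorEval [CompleteSpace F] {f : E → F} {n : ℕ} {x : E}
    (hf : ContDiffAt ℝ (n + 1) f x) :
    (fun y => f y - taylorEval f n x y) =O[𝓝 x] fun y => ‖y - x‖ ^ (n + 1) := by
  have hnear : ∀ᶠ z in 𝓝 x, ContDiffAt ℝ (n + 1) f z ∧
      ‖iteratedFDeriv ℝ (n + 1) f z‖ ≤ ‖iteratedFDeriv ℝ (n + 1) f x‖ + 1 := by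
    refine (hf.eventually (by simp)).and ?_
    have hc := (hf.continuousAt_iteratedFDeriv (k := n + 1) (by simp)).norm
    exact hc.eventually (Iic_mem_nhds (lt_add_one _))
  obtain ⟨ε, hε, hball⟩ := Metric.eventually_nhds_iff_ball.1 hnear
  refine IsBigO.of_bound (‖iteratedFDeriv ℝ (n + 1) f x‖ + 1) ?_
  filter_upwards [Metric.ball_mem_nhds x hε] with y hy
  have hseg : ∀ t ∈ Set.Icc (0 : ℝ) 1, x + t • (y - x) ∈ Metric.ball x ε := fun t ht =>
    (convex_ball x ε).add_smul_sub_mem (Metric.mem_ball_self hε) hy ht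
  have htaylor := map_add_eq_sum_add_integral_iteratedFDeriv (n := n) (x := x) (y := y - x)
    fun t ht => (hball _ (hseg t ht)).1
  rw [add_sub_cancel] at htaylor
  rw [htaylor, taylorEval, add_sub_cancel_left, norm_pow, norm_norm]
  exact norm_taylor_remainder_integral_le fun t ht => (hball _ (hseg t ht)).2

end Taylor

local notation "E2" => EuclideanSpace ℝ (Fin 2)

theorem fderiv_apply_eq_pd (f : E2 → ℝ) (z v : E2) :
    fderiv ℝ f z v = v 0 * pd 0 f z + v 1 * pd 1 f z := by
  have hv : v = v 0 • EuclideanSpace.single 0 (1 : ℝ) + v 1 • EuclideanSpace.single 1 (1 : ℝ) := by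
    ext j
    fin_cases j <;> simp
  conv_lhs => rw [hv]
  simp [pd]

theorem ContDiff.pd {f : E2 → ℝ} {n : WithTop ℕ∞} (hf : ContDiff ℝ (n + 1) f) (i : Fin 2) :
    ContDiff ℝ n (pd i f) :=
  (hf.fderiv_right le_rfl).clm_apply contDiff_const

theorem pd_pd_comm {f : E2 → ℝ} (hf : ContDiff ℝ 2 f) (i j : Fin 2) :
    pd i (pd j f) = pd j (pd i f) := by
  have hsnd : ∀ x k l, pd k (pd l f) x
      = fderiv ℝ (fderiv ℝ f) x (EuclideanSpace.single k 1) (EuclideanSpace.single l 1) := by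
    intro x k l
    have hd : DifferentiableAt ℝ (fderiv ℝ f) x :=
      (hf.fderiv_right (m := 1) le_rfl).differentiable one_ne_zero x
    change fderiv ℝ (fun z => fderiv ℝ f z (EuclideanSpace.single l 1)) x _ = _
    rw [fderiv_clm_apply hd (differentiableAt_const _)]
    simp
  funext x
  rw [hsnd, hsnd]
  exact hf.contDiffAt.isSymmSndFDerivAt (by simp [minSmoothness_of_isRCLikeNormedField]) _ _

theorem iteratedFDeriv_succ_apply_const {f : E2 → ℝ} {k : ℕ} (hf : ContDiff ℝ (k + 1) f)
    (x v : E2) :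
    iteratedFDeriv ℝ (k + 1) f x (fun _ => v)
      = v 0 * iteratedFDeriv ℝ k (pd 0 f) x (fun _ => v)
        + v 1 * iteratedFDeriv ℝ k (pd 1 f) x (fun _ => v) := by
  have hpd : (fun y => fderiv ℝ f y v) = fun y => v 0 * pd 0 f y + v 1 * pd 1 f y :=
    funext fun y => fderiv_apply_eq_pd f y v
  have hc : ∀ i : Fin 2, ContDiffAt ℝ k (fun y => v i • pd i f y) x := fun i =>
    ((hf.pd i).const_smul (v i)).contDiffAt
  rw [iteratedFDeriv_succ_apply_right,
    ← iteratedFDeriv_clm_apply_const_apply (hf.fderiv_right le_rfl) le_rfl, hpd]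
  simp only [← smul_eq_mul (a := v _)]
  rw [fun_iteratedFDeriv_add_apply (hc 0) (hc 1),
    iteratedFDeriv_const_smul_apply' (hf.pd 0).contDiffAt,
    iteratedFDeriv_const_smul_apply' (hf.pd 1).contDiffAt]
  rfl

theorem taylorEval_three_eq_add_gsub {u : E2 → ℝ} (hu : ContDiff ℝ 3 u) (x y : E2) :
    taylorEval u 3 x y = u x + gsub u x y := by
  have hu1 : ∀ i, ContDiff ℝ 2 (pd i u) := fun i => ContDiff.pd (n := 2) hu i
  have h3 : iteratedFDeriv ℝ 3 u x (fun _ => y - x) = _ :=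
    iteratedFDeriv_succ_apply_const (k := 2) hu x (y - x)
  have h2 : iteratedFDeriv ℝ 2 u x (fun _ => y - x) = _ :=
    iteratedFDeriv_succ_apply_const (k := 1) (hu.of_le (by norm_num)) x (y - x)
  have h2' : ∀ i, iteratedFDeriv ℝ 2 (pd i u) x (fun _ => y - x) = _ := fun i =>
    iteratedFDeriv_succ_apply_const (k := 1) (hu1 i) x (y - x)
  have h01 := pd_pd_comm (hu.of_le (by norm_num)) 0 1
  have h001 := pd_pd_comm (hu1 0) 0 1
  have h101 := pd_pd_comm (hu1 1) 0 1
  simp only [taylorEval, Finset.sum_range_succ, Finset.sum_range_zero, iteratedFDeriv_zero_apply,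
    iteratedFDeriv_one_apply, h3, h2, h2', fderiv_apply_eq_pd, gsub, h01, h001, h101]
  norm_num [Nat.factorial]
  ring

theorem continuous_gsub (u : E2 → ℝ) (x : E2) : Continuous (gsub u x) := by
  unfold gsub
  fun_prop

theorem continuous_rho {a : ℝ} (ha : 0 < a) : Continuous (rho a) := by
  have hfun : rho a = fun r => if r ≤ a then
      1 - 35 * (r / a) ^ 4 + 84 * (r / a) ^ 5 - 70 * (r / a) ^ 6 + 20 * (r / a) ^ 7 else 0 := by
    funext r
    rcases lt_trichotomy r a with h | rfl | h
    · rw [rho, if_pos h, if_pos h.le]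
    · rw [rho, if_neg (lt_irrefl _), if_pos le_rfl, div_self ha.ne']
      norm_num
    · rw [rho, if_neg (not_lt.2 h.le), if_neg (not_le.2 h)]
  rw [hfun]
  refine Continuous.if_le (by fun_prop) continuous_const continuous_id continuous_const ?_
  rintro r rfl
  rw [div_self ha.ne']
  norm_num

theorem abs_rho_sub_one_le {a r : ℝ} (ha : 0 < a) (hr : |r| < a) :
    |rho a r - 1| ≤ 209 / a ^ 4 * r ^ 4 := by
  have hlt : r < a := (le_abs_self r).trans_lt hr
  obtain ⟨ht1, ht2⟩ : -1 ≤ r / a ∧ r / a ≤ 1 := by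
    rw [← abs_le, abs_div, abs_of_pos ha, div_le_one ha]
    exact hr.le
  have hq : |-35 + 84 * (r / a) - 70 * (r / a) ^ 2 + 20 * (r / a) ^ 3| ≤ 209 := by
    rw [abs_le]
    constructor <;> nlinarith [mul_nonneg (sub_nonneg.2 ht1) (sub_nonneg.2 ht2), sq_nonneg (r / a)]
  calc |rho a r - 1|
      = |(r / a) ^ 4 * (-35 + 84 * (r / a) - 70 * (r / a) ^ 2 + 20 * (r / a) ^ 3)| := by
        rw [rho, if_pos hlt]
        ring_nf
    _ = (r / a) ^ 4 * |-35 + 84 * (r / a) - 70 * (r / a) ^ 2 + 20 * (r / a) ^ 3| := by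
        rw [abs_mul, abs_of_nonneg (by positivity)]
    _ ≤ (r / a) ^ 4 * 209 := by gcongr
    _ = 209 / a ^ 4 * r ^ 4 := by ring

theorem isBigO_rho_sub_one {a : ℝ} (ha : 0 < a) :
    (fun r => rho a r - 1) =O[𝓝 0] fun r => r ^ 4 := by
  refine IsBigO.of_bound (209 / a ^ 4) ?_
  filter_upwards [Metric.ball_mem_nhds (0 : ℝ) ha] with r hr
  rw [mem_ball_zero_iff, Real.norm_eq_abs] at hr
  simpa [Real.norm_eq_abs, Even.pow_abs ⟨2, rfl⟩] using abs_rho_sub_one_le ha hr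

theorem isBigO_singularity_subtraction {a : ℝ} (ha : 0 < a) {u : E2 → ℝ} (hu : ContDiff ℝ 4 u)
    (x : E2) :
    (fun y => u x - u y + rho a ‖x - y‖ * gsub u x y) =O[𝓝 x] fun y => ‖y - x‖ ^ 4 := by
  have htaylor : (fun y => u y - taylorEval u 3 x y) =O[𝓝 x] fun y => ‖y - x‖ ^ 4 :=
    hu.contDiffAt.isBigO_sub_taylorEval
  have hnorm : Tendsto (fun y => ‖x - y‖) (𝓝 x) (𝓝 0) := by
    simpa [norm_sub_rev x] using tendsto_norm_sub_self x
  have hrho : (fun y => rho a ‖x - y‖ - 1) =O[𝓝 x] fun y => ‖y - x‖ ^ 4 := by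
    simpa [Function.comp_def, norm_sub_rev x] using (isBigO_rho_sub_one ha).comp_tendsto hnorm
  have hgsub : gsub u x =O[𝓝 x] fun _ => (1 : ℝ) :=
    (continuous_gsub u x).continuousAt.isBigO_one ℝ
  have hsplit : (fun y => u x - u y + rho a ‖x - y‖ * gsub u x y)
      = fun y => -(u y - taylorEval u 3 x y) + (rho a ‖x - y‖ - 1) * gsub u x y := by
    funext y
    rw [taylorEval_three_eq_add_gsub (hu.of_le (by norm_num))]
    ring
  rw [hsplit]
  simpa using htaylor.neg_left.add (by simpa using hrho.mul hgsub)

theorem Asymptotics.IsBigO.exists_pos_bound_of_norm_sub_le {E F : Type*}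
    [SeminormedAddCommGroup E] [Norm F] {f : E → F} {x : E} {n : ℕ} {a : ℝ}
    (h : f =O[𝓝 x] fun y => ‖y - x‖ ^ n) (ha : 0 < a) :
    ∃ C > 0, ∃ δ ∈ Set.Ioc 0 a, ∀ y, ‖y - x‖ ≤ δ → ‖f y‖ ≤ C * ‖y - x‖ ^ n := by
  obtain ⟨C, hC, hCf⟩ := h.exists_pos
  obtain ⟨ε, hε, hball⟩ := Metric.eventually_nhds_iff_ball.1 hCf.bound
  refine ⟨C, hC, min (ε / 2) a, ⟨by positivity, min_le_right _ _⟩, fun y hy => ?_⟩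
  have hyε : y ∈ Metric.ball x ε := by
    rw [Metric.mem_ball, dist_eq_norm]
    linarith [min_le_left (ε / 2) a]
  simpa using hball y hyε

theorem Asymptotics.IsBigO.tendsto_div_norm_sub_rpow {E : Type*} [NormedAddCommGroup E]
    {f : E → ℝ} {x : E} {n : ℕ} {p : ℝ} (h : f =O[𝓝 x] fun y => ‖y - x‖ ^ n) (hp : p < n) :
    Tendsto (fun y => f y / ‖x - y‖ ^ p) (𝓝[≠] x) (𝓝 0) := by
  have hquot : (fun y => f y / ‖x - y‖ ^ p) =O[𝓝[≠] x]
      fun y => ‖y - x‖ ^ n * (‖x - y‖ ^ p)⁻¹ := by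
    simpa only [div_eq_mul_inv] using (h.mono nhdsWithin_le_nhds).mul (isBigO_refl _ _)
  have hpow : (fun y => ‖y - x‖ ^ n * (‖x - y‖ ^ p)⁻¹) =ᶠ[𝓝[≠] x]
      fun y => ‖y - x‖ ^ ((n : ℝ) - p) := by
    filter_upwards [self_mem_nhdsWithin] with y hy
    have hpos : 0 < ‖y - x‖ := norm_pos_iff.2 (sub_ne_zero.2 hy)
    rw [norm_sub_rev x, Real.rpow_sub hpos, Real.rpow_natCast, div_eq_mul_inv]
  have hnorm : Tendsto (fun y => ‖y - x‖) (𝓝[≠] x) (𝓝 0) :=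
    tendsto_nhdsWithin_of_tendsto_nhds (tendsto_norm_sub_self x)
  refine hquot.trans_tendsto (Tendsto.congr' hpow.symm ?_)
  simpa [Real.zero_rpow (sub_pos.2 hp).ne'] using hnorm.rpow_const (Or.inr (sub_pos.2 hp).le)

theorem continuous_singularity_numerator {a : ℝ} (ha : 0 < a) {u : E2 → ℝ} (hu : Continuous u)
    (x : E2) : Continuous fun y => u x - u y + rho a ‖x - y‖ * gsub u x y :=
  (continuous_const.sub hu).add
    (((continuous_rho ha).comp (continuous_const.sub continuous_id).norm).mul (continuous_gsub u x))

theorem continuous_ite_of_tendsto_nhdsNE {X Y : Type*} [TopologicalSpace X] [T1Space X]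
    [DecidableEq X] [TopologicalSpace Y] {f : X → Y} {x : X} {y₀ : Y} (hf : ∀ y ≠ x, ContinuousAt f y)
    (hlim : Tendsto f (𝓝[≠] x) (𝓝 y₀)) : Continuous fun y => if y = x then y₀ else f y := by
  have hupdate : (fun y => if y = x then y₀ else f y) = Function.update f x y₀ := by
    funext y
    simp [Function.update_apply]
  rw [hupdate, ← continuousOn_univ, continuousOn_update_iff, ← compl_eq_univ_sdiff]
  exact ⟨fun y hy => (hf y hy).continuousWithinAt, fun _ => hlim⟩

theorem singularity_subtraction_fourth_order (a s : ℝ) (ha : 0 < a)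
    (hs : s ∈ Set.Ioo (0 : ℝ) 1)
    (u : EuclideanSpace ℝ (Fin 2) → ℝ) (hu : ContDiff ℝ 4 u)
    (x : EuclideanSpace ℝ (Fin 2)) :
    (∃ C > (0 : ℝ), ∃ δ ∈ Set.Ioc (0 : ℝ) a, ∀ y : EuclideanSpace ℝ (Fin 2),
        0 < ‖y - x‖ → ‖y - x‖ ≤ δ →
        |u x - u y + rho a ‖x - y‖ * gsub u x y| ≤ C * ‖x - y‖ ^ 4) ∧
    Tendsto
      (fun y : EuclideanSpace ℝ (Fin 2) =>
        (u x - u y + rho a ‖x - y‖ * gsub u x y) / ‖x - y‖ ^ (2 + 2 * s))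
      (𝓝[≠] x) (𝓝 0) ∧
    Continuous (fun y : EuclideanSpace ℝ (Fin 2) =>
      if y = x then 0
      else (u x - u y + rho a ‖x - y‖ * gsub u x y) / ‖x - y‖ ^ (2 + 2 * s)) := by
  have hO := isBigO_singularity_subtraction ha hu x
  have hlim := hO.tendsto_div_norm_sub_rpow (p := 2 + 2 * s) (by push_cast; linarith [hs.2])
  refine ⟨?_, hlim, continuous_ite_of_tendsto_nhdsNE (fun y hy => ?_) hlim⟩
  · obtain ⟨C, hC, δ, hδ, hbound⟩ := hO.exists_pos_bound_of_norm_sub_le ha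
    exact ⟨C, hC, δ, hδ, fun y _ hy => by simpa [norm_sub_rev x y] using hbound y hy⟩
  · have hxy : 0 < ‖x - y‖ := norm_pos_iff.2 (sub_ne_zero.2 hy.symm)
    exact (continuous_singularity_numerator ha hu.continuous x).continuousAt.div
      ((continuousAt_const.sub continuousAt_id).norm.rpow_const (Or.inl hxy.ne'))
      (Real.rpow_pos_of_pos hxy _).ne'
end

section
/- Let p ≥ 0 be an integer and u₁ ≤ u₂ ≤ … ≤ u_{l+1} a nondecreasing knot vector with l ≥ p + 1, and let B_{i,p} (1 ≤ i ≤ l − p) be the B-spline basis functions. Then for every u ∈ [u_{p+1}, u_{l−p+1}), Σ_{i=1}^{l−p} B_{i,p}(u) = 1 (partition of unity). -/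
open MeasureTheory Set Filter Topology Classical

/-- The Cox–de Boor B-spline basis functions `B_{i,p}` for the knot vector `U`
(indexed from 1), with the convention that any term with zero denominator is 0. -/
noncomputable def bspline (U : ℕ → ℝ) : ℕ → ℕ → ℝ → ℝ
  | 0, i, t => if U i ≤ t ∧ t < U (i + 1) then 1 else 0
  | p + 1, i, t =>
      (if U (i + p + 1) = U i then 0
        else (t - U i) / (U (i + p + 1) - U i) * bspline U p i t) +
      (if U (i + p + 2) = U (i + 1) then 0
        else (U (i + p + 2) - t) / (U (i + p + 2) - U (i + 1)) * bspline U p (i + 1) t)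

/-! For `p = 0`, monotonicity of the knots gives `B_{i,0} = [U i ≤ t] - [U (i+1) ≤ t]`, and the sum
telescopes. For the inductive step, split each `B_{i,p+1}` into its two Cox–de Boor terms; regrouping the sum by
the lower-degree spline they share, the two weights attached to `B_{j,p}` add up to
`(t - U j + U (j+p+1) - t) / (U (j+p+1) - U j) = 1`, so the degree-`p+1` sum over `n` splines is the
degree-`p` sum over `n + 1` splines, up to the two boundary terms. These vanish because `t` lies
outside the supports of `B_{1,p}` and `B_{n+1,p}`. -/

noncomputable def bsplineLeftTerm (U : ℕ → ℝ) (p j : ℕ) (t : ℝ) : ℝ :=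
  if U (j + p + 1) = U j then 0 else (t - U j) / (U (j + p + 1) - U j) * bspline U p j t

noncomputable def bsplineRightTerm (U : ℕ → ℝ) (p j : ℕ) (t : ℝ) : ℝ :=
  if U (j + p + 1) = U j then 0 else (U (j + p + 1) - t) / (U (j + p + 1) - U j) * bspline U p j t

lemma bspline_succ (U : ℕ → ℝ) (p i : ℕ) (t : ℝ) :
    bspline U (p + 1) i t = bsplineLeftTerm U p i t + bsplineRightTerm U p (i + 1) t := by
  rw [bspline, bsplineLeftTerm, bsplineRightTerm, show i + 1 + p + 1 = i + p + 2 by omega]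

lemma bspline_eq_zero_of_lt_knots (U : ℕ → ℝ) (t : ℝ) (p : ℕ) :
    ∀ i, (∀ k ∈ Icc i (i + p), t < U k) → bspline U p i t = 0 := by
  induction p with
  | zero =>
    intro i h
    have := h i ⟨le_rfl, le_rfl⟩
    simp only [bspline, ite_eq_right_iff]
    rintro ⟨hi, -⟩
    linarith
  | succ p ih =>
    intro i h
    rw [bspline, ih i fun k ⟨hk₁, hk₂⟩ => h k ⟨hk₁, by omega⟩,
      ih (i + 1) fun k ⟨hk₁, hk₂⟩ => h k ⟨by omega, by omega⟩]
    simp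

lemma bspline_eq_zero_of_knots_le (U : ℕ → ℝ) (t : ℝ) (p : ℕ) :
    ∀ i, (∀ k ∈ Icc (i + 1) (i + p + 1), U k ≤ t) → bspline U p i t = 0 := by
  induction p with
  | zero =>
    intro i h
    have := h (i + 1) ⟨le_rfl, le_rfl⟩
    simp only [bspline, ite_eq_right_iff]
    rintro ⟨-, hi⟩
    linarith
  | succ p ih =>
    intro i h
    rw [bspline, ih i fun k ⟨hk₁, hk₂⟩ => h k ⟨hk₁, by omega⟩,
      ih (i + 1) fun k ⟨hk₁, hk₂⟩ => h k ⟨by omega, by omega⟩]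
    simp

lemma bspline_eq_zero_of_notMem_Ico {U : ℕ → ℝ} {p i : ℕ} {t : ℝ}
    (hU : MonotoneOn U (Icc i (i + p + 1))) (ht : t ∉ Ico (U i) (U (i + p + 1))) :
    bspline U p i t = 0 := by
  rcases lt_or_ge t (U i) with h | h
  · exact bspline_eq_zero_of_lt_knots U t p i fun k ⟨hk₁, hk₂⟩ =>
      h.trans_le (hU ⟨le_rfl, by omega⟩ ⟨hk₁, by omega⟩ hk₁)
  · have h' : U (i + p + 1) ≤ t := by simpa [h] using ht
    exact bspline_eq_zero_of_knots_le U t p i fun k ⟨hk₁, hk₂⟩ =>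
      (hU ⟨by omega, hk₂⟩ ⟨by omega, le_rfl⟩ hk₂).trans h'

lemma bsplineLeftTerm_add_bsplineRightTerm {U : ℕ → ℝ} {p j : ℕ} {t : ℝ}
    (hU : MonotoneOn U (Icc j (j + p + 1))) :
    bsplineLeftTerm U p j t + bsplineRightTerm U p j t = bspline U p j t := by
  unfold bsplineLeftTerm bsplineRightTerm
  split_ifs with hD
  -- a span `[U j, U (j+p+1))` of length zero carries no spline
  · rw [add_zero, bspline_eq_zero_of_notMem_Ico hU (by simp [hD])]
  · field_simp [sub_ne_zero.mpr hD]
    ring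

lemma bsplineLeftTerm_eq_zero {U : ℕ → ℝ} {p j : ℕ} {t : ℝ} (h : bspline U p j t = 0) :
    bsplineLeftTerm U p j t = 0 := by
  simp [bsplineLeftTerm, h]

lemma bsplineRightTerm_eq_zero {U : ℕ → ℝ} {p j : ℕ} {t : ℝ} (h : bspline U p j t = 0) :
    bsplineRightTerm U p j t = 0 := by
  simp [bsplineRightTerm, h]

lemma sum_bspline_succ_add {U : ℕ → ℝ} {p : ℕ} {t : ℝ} :
    ∀ {n : ℕ}, MonotoneOn U (Icc 1 (n + p + 2)) →
      ∑ i ∈ Finset.Icc 1 n, bspline U (p + 1) i t + bsplineRightTerm U p 1 t +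
        bsplineLeftTerm U p (n + 1) t = ∑ i ∈ Finset.Icc 1 (n + 1), bspline U p i t
  | 0, hU => by
    have hU₁ : MonotoneOn U (Icc 1 (1 + p + 1)) := hU.mono (Icc_subset_Icc le_rfl (by omega))
    simp [add_comm (bsplineRightTerm U p 1 t), bsplineLeftTerm_add_bsplineRightTerm hU₁]
  | n + 1, hU => by
    rw [Finset.sum_Icc_succ_top (by omega), Finset.sum_Icc_succ_top (by omega),
      ← sum_bspline_succ_add (hU.mono (Icc_subset_Icc le_rfl (by omega))), bspline_succ,
      ← bsplineLeftTerm_add_bsplineRightTerm (hU.mono (Icc_subset_Icc (by omega) (by omega)))]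
    ring

lemma bspline_zero_eq_sub {U : ℕ → ℝ} {i : ℕ} {t : ℝ} (h : U i ≤ U (i + 1)) :
    bspline U 0 i t = (if U i ≤ t then 1 else 0) - (if U (i + 1) ≤ t then 1 else 0) := by
  rw [bspline]
  by_cases h₁ : U i ≤ t
  · by_cases h₂ : U (i + 1) ≤ t
    · simp [h₁, h₂]
    · simp [h₁, h₂, not_le.1 h₂]
  · have h₂ : ¬U (i + 1) ≤ t := fun h₂ => h₁ (h.trans h₂)
    simp [h₁, h₂]

lemma sum_bspline_zero {U : ℕ → ℝ} {t : ℝ} :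
    ∀ {n : ℕ}, MonotoneOn U (Icc 1 (n + 1)) → ∑ i ∈ Finset.Icc 1 n, bspline U 0 i t =
      (if U 1 ≤ t then 1 else 0) - (if U (n + 1) ≤ t then 1 else 0)
  | 0, _ => by simp
  | n + 1, hU => by
    rw [Finset.sum_Icc_succ_top (by omega),
      sum_bspline_zero (hU.mono (Icc_subset_Icc le_rfl (by omega))),
      bspline_zero_eq_sub (hU ⟨by omega, by omega⟩ ⟨by omega, le_rfl⟩ (by omega))]
    ring

lemma sum_bspline_eq_one {U : ℕ → ℝ} {t : ℝ} :
    ∀ {p n : ℕ}, MonotoneOn U (Icc 1 (n + p + 1)) → t ∈ Ico (U (p + 1)) (U (n + 1)) →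
      ∑ i ∈ Finset.Icc 1 n, bspline U p i t = 1
  | 0, n, hU, ⟨h₁, h₂⟩ => by
    rw [sum_bspline_zero hU, if_pos h₁, if_neg (not_le.2 h₂)]
    norm_num
  | p + 1, n, hU, ⟨h₁, h₂⟩ => by
    have hU' : MonotoneOn U (Icc 1 (n + 1 + p + 1)) := by
      rwa [show n + 1 + p + 1 = n + (p + 1) + 1 by omega]
    have hB₁ : bspline U p 1 t = 0 :=
      bspline_eq_zero_of_notMem_Ico (hU.mono (Icc_subset_Icc le_rfl (by omega)))
        fun h => (not_lt.2 h₁) (by simpa [add_comm] using h.2)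
    have hBn : bspline U p (n + 1) t = 0 :=
      bspline_eq_zero_of_notMem_Ico (hU.mono (Icc_subset_Icc (by omega) (by omega)))
        fun h => (not_lt.2 h.1) h₂
    have hmem : t ∈ Ico (U (p + 1)) (U (n + 1 + 1)) :=
      ⟨(hU ⟨by omega, by omega⟩ ⟨by omega, by omega⟩ (by omega)).trans h₁,
        h₂.trans_le (hU ⟨by omega, by omega⟩ ⟨by omega, by omega⟩ (by omega))⟩
    rw [← sum_bspline_eq_one hU' hmem, ← sum_bspline_succ_add (by rwa [add_assoc] at hU),
      bsplineRightTerm_eq_zero hB₁, bsplineLeftTerm_eq_zero hBn, add_zero, add_zero]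

theorem bspline_partition_of_unity (p l : ℕ) (U : ℕ → ℝ)
    (hl : p + 1 ≤ l)
    (hU : ∀ i, 1 ≤ i → i ≤ l → U i ≤ U (i + 1))
    (t : ℝ) (ht : t ∈ Set.Ico (U (p + 1)) (U (l - p + 1))) :
    ∑ i ∈ Finset.Icc 1 (l - p), bspline U p i t = 1 := by
  have hmono : MonotoneOn U (Icc 1 (l + 1)) :=
    monotoneOn_of_le_succ ordConnected_Icc fun i _ hi hi' =>
      hU i hi.1 (by simp only [Order.succ_eq_add_one, mem_Icc] at hi'; omega)
  exact sum_bspline_eq_one (by rwa [show l - p + p + 1 = l + 1 by omega]) ht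
end

section
/- Let p ≥ 1 be an integer and u₁ ≤ u₂ ≤ … ≤ u_{l+1} a nondecreasing knot vector such that the interior knots are simple, i.e. u_{p+1} < u_{p+2} < … < u_{l−p+1}. Then each B-spline basis function B_{i,p} (1 ≤ i ≤ l − p) is (p − 1)-times continuously differentiable on the open interval (u_{p+1}, u_{l−p+1}). -/
/-!
Near any point `x`, `B_{i,p}` is a smooth function plus `c · (t - x)₊ ^ p`. Away from the knots
the recursion only multiplies by affine functions, so `B_{i,p}` is locally smooth (`c = 0`). At a
simple knot `x = u_j`, the Heaviside jump of `B_{j-1,0}` and `B_{j,0}` is propagated by the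
recursion, and each step raises the power of `(t - x)₊` by one: the two affine weights combine the
jump coefficients of `B_{i,q}` and `B_{i+1,q}` into a multiple of `t - x`, which is the
divided-difference recursion for `(u_{i+q+1} - u_i) / ∏_{k ≠ j} (u_k - u_j)`. Since
`(t - x)₊ ^ p` is `C^{p-1}`, so is `B_{i,p}`.
-/

open MeasureTheory Set Filter Topology Classical

open scoped ContDiff

theorem bspline_zero (U : ℕ → ℝ) (i : ℕ) (t : ℝ) :
    bspline U 0 i t = if U i ≤ t ∧ t < U (i + 1) then 1 else 0 := rfl

/-- The zero-denominator convention of the Cox–de Boor recursion is Lean's `x / 0 = 0`. -/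
theorem bspline_succ_s11 (U : ℕ → ℝ) (q i : ℕ) (t : ℝ) :
    bspline U (q + 1) i t =
      (t - U i) / (U (i + q + 1) - U i) * bspline U q i t +
        (U (i + q + 2) - t) / (U (i + q + 2) - U (i + 1)) * bspline U q (i + 1) t := by
  simp only [bspline]
  congr 1 <;> split_ifs with h <;> simp [h]

theorem bspline_succ_eventuallyEq {U : ℕ → ℝ} {q i : ℕ} {l : Filter ℝ} {f g : ℝ → ℝ}
    (hf : bspline U q i =ᶠ[l] f) (hg : bspline U q (i + 1) =ᶠ[l] g) :
    bspline U (q + 1) i =ᶠ[l] fun t =>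
      (t - U i) / (U (i + q + 1) - U i) * f t +
        (U (i + q + 2) - t) / (U (i + q + 2) - U (i + 1)) * g t := by
  filter_upwards [hf, hg] with t hft hgt
  rw [bspline_succ_s11, hft, hgt]

theorem eventually_le_iff_le_of_ne {c x : ℝ} (h : c ≠ x) : ∀ᶠ t in 𝓝 x, (c ≤ t ↔ c ≤ x) := by
  rcases h.lt_or_gt with h | h
  · filter_upwards [lt_mem_nhds h] with t ht
    exact iff_of_true ht.le h.le
  · filter_upwards [gt_mem_nhds h] with t ht
    exact iff_of_false ht.not_ge h.not_ge

theorem eventually_lt_iff_lt_of_ne {c x : ℝ} (h : c ≠ x) : ∀ᶠ t in 𝓝 x, (t < c ↔ x < c) := by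
  filter_upwards [eventually_le_iff_le_of_ne h] with t ht
  simpa only [not_le] using ht.not

/-- The truncated power `(t - x)₊ ^ q`; for `q = 0` it is the right-continuous Heaviside step at
`x`. -/
noncomputable def truncPow (x : ℝ) (q : ℕ) (t : ℝ) : ℝ :=
  if x ≤ t then (t - x) ^ q else 0

theorem truncPow_succ (x : ℝ) (q : ℕ) (t : ℝ) :
    truncPow x (q + 1) t = (t - x) * truncPow x q t := by
  unfold truncPow
  split_ifs <;> ring

theorem continuous_truncPow_succ (x : ℝ) (q : ℕ) : Continuous (truncPow x (q + 1)) :=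
  Continuous.if_le (by fun_prop) continuous_const continuous_const continuous_id
    fun t ht => by simp [ht]

theorem hasDerivAt_truncPow (x : ℝ) (q : ℕ) (t : ℝ) :
    HasDerivAt (truncPow x (q + 2)) ((q + 2) * truncPow x (q + 1) t) t := by
  rcases eq_or_ne x t with rfl | hxt
  · have hO : truncPow x (q + 2) =O[𝓝 x] fun s => ‖s - x‖ ^ (q + 2) := by
      refine .of_bound 1 (.of_forall fun s => ?_)
      unfold truncPow
      split_ifs <;> simp [abs_nonneg]
    simpa [truncPow] using (hO.hasFDerivAt (by omega)).hasDerivAt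
  · have hloc : truncPow x (q + 2) =ᶠ[𝓝 t] fun s => if x ≤ t then (s - x) ^ (q + 2) else 0 := by
      filter_upwards [eventually_le_iff_le_of_ne hxt] with s hs
      simp only [truncPow, hs]
    refine HasDerivAt.congr_of_eventuallyEq ?_ hloc
    unfold truncPow
    split_ifs
    · simpa using ((hasDerivAt_id t).sub_const x).fun_pow (q + 2)
    · simpa using hasDerivAt_const t (0 : ℝ)

theorem contDiff_truncPow (x : ℝ) (q : ℕ) : ContDiff ℝ q (truncPow x (q + 1)) := by
  induction q with
  | zero => simpa using continuous_truncPow_succ x 0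
  | succ q ih =>
    have hderiv : deriv (truncPow x (q + 2)) = fun t => (q + 2) * truncPow x (q + 1) t :=
      funext fun t => (hasDerivAt_truncPow x q t).deriv
    rw [Nat.cast_succ, contDiff_succ_iff_deriv, hderiv]
    exact ⟨fun t => (hasDerivAt_truncPow x q t).differentiableAt, by simp,
      contDiff_const.mul ih⟩

theorem bspline_eventuallyEq_of_forall_ne {U : ℕ → ℝ} {x : ℝ} {q i : ℕ}
    (hx : ∀ k ∈ Finset.Icc i (i + q + 1), U k ≠ x) :
    ∃ f : ℝ → ℝ, ContDiff ℝ ∞ f ∧ bspline U q i =ᶠ[𝓝 x] f := by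
  induction q generalizing i with
  | zero =>
    refine ⟨fun _ => bspline U 0 i x, contDiff_const, ?_⟩
    filter_upwards [eventually_le_iff_le_of_ne (hx i (by simp)),
      eventually_lt_iff_lt_of_ne (hx (i + 1) (by simp))] with t hle hlt
    simp only [bspline_zero, hle, hlt]
  | succ q ih =>
    obtain ⟨f₁, hf₁, h₁⟩ := ih fun k hk => hx k (Finset.Icc_subset_Icc le_rfl (by omega) hk)
    obtain ⟨f₂, hf₂, h₂⟩ := ih (i := i + 1) fun k hk =>
      hx k (Finset.Icc_subset_Icc (by omega) (by omega) hk)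
    exact ⟨_, by fun_prop, bspline_succ_eventuallyEq h₁ h₂⟩

def IsSimpleKnotIn (U : ℕ → ℝ) (j : ℕ) (s : Finset ℕ) : Prop :=
  ∀ k ∈ s, (k < j → U k < U j) ∧ (j < k → U j < U k)

namespace IsSimpleKnotIn

variable {U : ℕ → ℝ} {j : ℕ} {s : Finset ℕ}

theorem mono {t : Finset ℕ} (hj : IsSimpleKnotIn U j s) (hts : t ⊆ s) : IsSimpleKnotIn U j t :=
  fun k hk => hj k (hts hk)

theorem lt {k₁ k₂ : ℕ} (hj : IsSimpleKnotIn U j s) (hk₁ : k₁ ∈ s) (hk₂ : k₂ ∈ s)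
    (h₁ : k₁ ≤ j) (h₂ : j ≤ k₂) (h : k₁ < k₂) : U k₁ < U k₂ := by
  rcases h₁.lt_or_eq with h₁ | rfl
  · rcases h₂.lt_or_eq with h₂ | rfl
    · exact ((hj k₁ hk₁).1 h₁).trans ((hj k₂ hk₂).2 h₂)
    · exact (hj k₁ hk₁).1 h₁
  · exact (hj k₂ hk₂).2 h

theorem ne {k : ℕ} (hj : IsSimpleKnotIn U j s) (hk : k ∈ s) (hkj : k ≠ j) : U k ≠ U j := by
  rcases hkj.lt_or_gt with h | h
  exacts [((hj k hk).1 h).ne, ((hj k hk).2 h).ne']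

theorem prod_erase_ne_zero {t : Finset ℕ} (hj : IsSimpleKnotIn U j s) (hts : t ⊆ s) :
    ∏ k ∈ t.erase j, (U k - U j) ≠ 0 :=
  Finset.prod_ne_zero_iff.2 fun _ hk =>
    sub_ne_zero.2 (hj.ne (hts (Finset.mem_of_mem_erase hk)) (Finset.ne_of_mem_erase hk))

end IsSimpleKnotIn

/-- The coefficient of `(t - U j)₊ ^ q` in `B_{i,q}` near a simple knot `U j`: the
divided-difference formula `(U_{i+q+1} - U_i) / ∏_{k ≠ j} (U_k - U_j)`, and `0` when `U j`
is not a knot of `B_{i,q}`. -/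
noncomputable def jumpCoeff (U : ℕ → ℝ) (j q i : ℕ) : ℝ :=
  if j ∈ Finset.Icc i (i + q + 1) then
    (U (i + q + 1) - U i) / ∏ k ∈ (Finset.Icc i (i + q + 1)).erase j, (U k - U j)
  else 0

section jumpCoeff

variable {U : ℕ → ℝ} {j q i : ℕ}

theorem jumpCoeff_eq_zero (h : j < i ∨ i + q + 1 < j) : jumpCoeff U j q i = 0 :=
  if_neg (by rw [Finset.mem_Icc]; omega)

theorem jumpCoeff_succ_first_knot (hj : IsSimpleKnotIn U i (Finset.Icc i (i + q + 2))) (t : ℝ) :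
    (t - U i) / (U (i + q + 1) - U i) * jumpCoeff U i q i =
      (t - U i) * jumpCoeff U i (q + 1) i := by
  have hM := hj.prod_erase_ne_zero (t := Finset.Icc (i + 1) (i + q + 1))
    (Finset.Icc_subset_Icc (by omega) (by omega))
  have h₁ : (Finset.Icc i (i + q + 1)).erase i = (Finset.Icc (i + 1) (i + q + 1)).erase i := by
    ext; simp only [Finset.mem_erase, Finset.mem_Icc]; omega
  have h₂ : (Finset.Icc i (i + q + 2)).erase i =
      insert (i + q + 2) ((Finset.Icc (i + 1) (i + q + 1)).erase i) := by
    ext; simp only [Finset.mem_erase, Finset.mem_Icc, Finset.mem_insert]; omega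
  have hq₁ := (hj (i + q + 1) (Finset.mem_Icc.2 ⟨by omega, by omega⟩)).2 (by omega)
  have hq₂ := (hj (i + q + 2) (Finset.mem_Icc.2 ⟨by omega, by omega⟩)).2 (by omega)
  rw [jumpCoeff, jumpCoeff, if_pos (Finset.left_mem_Icc.2 (by omega)),
    if_pos (Finset.left_mem_Icc.2 (by omega)), h₁, show i + (q + 1) + 1 = i + q + 2 by ring, h₂,
    Finset.prod_insert (by simp)]
  field_simp [sub_ne_zero.2 hq₁.ne', sub_ne_zero.2 hq₂.ne']

theorem jumpCoeff_succ_last_knot (hj : IsSimpleKnotIn U (i + q + 2) (Finset.Icc i (i + q + 2)))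
    (t : ℝ) :
    (U (i + q + 2) - t) / (U (i + q + 2) - U (i + 1)) * jumpCoeff U (i + q + 2) q (i + 1) =
      (t - U (i + q + 2)) * jumpCoeff U (i + q + 2) (q + 1) i := by
  have hM := hj.prod_erase_ne_zero (t := Finset.Icc (i + 1) (i + q + 1))
    (Finset.Icc_subset_Icc (by omega) (by omega))
  have h₁ : (Finset.Icc (i + 1) (i + q + 2)).erase (i + q + 2) =
      (Finset.Icc (i + 1) (i + q + 1)).erase (i + q + 2) := by
    ext; simp only [Finset.mem_erase, Finset.mem_Icc]; omega
  have h₂ : (Finset.Icc i (i + q + 2)).erase (i + q + 2) =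
      insert i ((Finset.Icc (i + 1) (i + q + 1)).erase (i + q + 2)) := by
    ext; simp only [Finset.mem_erase, Finset.mem_Icc, Finset.mem_insert]; omega
  have hq₁ := (hj (i + 1) (Finset.mem_Icc.2 ⟨by omega, by omega⟩)).1 (by omega)
  have hq₂ := (hj i (Finset.mem_Icc.2 ⟨by omega, by omega⟩)).1 (by omega)
  rw [jumpCoeff, jumpCoeff, if_pos (Finset.mem_Icc.2 ⟨by omega, by omega⟩),
    if_pos (Finset.mem_Icc.2 ⟨by omega, by omega⟩), show i + 1 + q + 1 = i + q + 2 by ring, h₁,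
    show i + (q + 1) + 1 = i + q + 2 by ring, h₂, Finset.prod_insert (by simp)]
  field_simp [sub_ne_zero.2 hq₁.ne', sub_ne_zero.2 hq₂.ne]
  ring

theorem jumpCoeff_succ_inner_knot (hj : IsSimpleKnotIn U j (Finset.Icc i (i + q + 2)))
    (hij : i < j) (hjq : j < i + q + 2) (t : ℝ) :
    (t - U i) / (U (i + q + 1) - U i) * jumpCoeff U j q i +
        (U (i + q + 2) - t) / (U (i + q + 2) - U (i + 1)) * jumpCoeff U j q (i + 1) =
      (t - U j) * jumpCoeff U j (q + 1) i := by
  have hM := hj.prod_erase_ne_zero (t := Finset.Icc (i + 1) (i + q + 1))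
    (Finset.Icc_subset_Icc (by omega) (by omega))
  have h₁ : (Finset.Icc i (i + q + 1)).erase j =
      insert i ((Finset.Icc (i + 1) (i + q + 1)).erase j) := by
    ext; simp only [Finset.mem_erase, Finset.mem_Icc, Finset.mem_insert]; omega
  have h₂ : (Finset.Icc (i + 1) (i + q + 2)).erase j =
      insert (i + q + 2) ((Finset.Icc (i + 1) (i + q + 1)).erase j) := by
    ext; simp only [Finset.mem_erase, Finset.mem_Icc, Finset.mem_insert]; omega
  have h₃ : (Finset.Icc i (i + q + 2)).erase j =
      insert i ((Finset.Icc (i + 1) (i + q + 2)).erase j) := by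
    ext; simp only [Finset.mem_erase, Finset.mem_Icc, Finset.mem_insert]; omega
  have hi₁ := hj.lt (Finset.mem_Icc.2 ⟨le_rfl, by omega⟩) (Finset.mem_Icc.2 ⟨by omega, by omega⟩)
    hij.le (by omega) (show i < i + q + 1 by omega)
  have hi₂ := hj.lt (Finset.mem_Icc.2 ⟨by omega, by omega⟩) (Finset.mem_Icc.2 ⟨by omega, le_rfl⟩)
    (by omega) hjq.le (show i + 1 < i + q + 2 by omega)
  have hij' := (hj i (Finset.mem_Icc.2 ⟨le_rfl, by omega⟩)).1 hij
  have hjq' := (hj (i + q + 2) (Finset.mem_Icc.2 ⟨by omega, le_rfl⟩)).2 hjq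
  rw [jumpCoeff, jumpCoeff, jumpCoeff, if_pos (Finset.mem_Icc.2 ⟨by omega, by omega⟩),
    if_pos (Finset.mem_Icc.2 ⟨by omega, by omega⟩), if_pos (Finset.mem_Icc.2 ⟨by omega, by omega⟩),
    show i + 1 + q + 1 = i + q + 2 by ring, show i + (q + 1) + 1 = i + q + 2 by ring, h₁, h₃,
    Finset.prod_insert (by simp), Finset.prod_insert (by simp), h₂, Finset.prod_insert (by simp)]
  field_simp [sub_ne_zero.2 hi₁.ne', sub_ne_zero.2 hi₂.ne', sub_ne_zero.2 hij'.ne,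
    sub_ne_zero.2 hjq'.ne']
  ring

theorem jumpCoeff_succ (hj : IsSimpleKnotIn U j (Finset.Icc i (i + q + 2))) (t : ℝ) :
    (t - U i) / (U (i + q + 1) - U i) * jumpCoeff U j q i +
        (U (i + q + 2) - t) / (U (i + q + 2) - U (i + 1)) * jumpCoeff U j q (i + 1) =
      (t - U j) * jumpCoeff U j (q + 1) i := by
  by_cases hout : j < i ∨ i + q + 2 < j
  · rw [jumpCoeff_eq_zero (q := q) (i := i) (by omega),
      jumpCoeff_eq_zero (q := q) (i := i + 1) (by omega),
      jumpCoeff_eq_zero (q := q + 1) (i := i) (by omega)]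
    ring
  obtain rfl | hij : j = i ∨ i < j := by omega
  · rw [jumpCoeff_eq_zero (q := q) (i := j + 1) (by omega), mul_zero, add_zero,
      jumpCoeff_succ_first_knot hj]
  obtain rfl | hjq : j = i + q + 2 ∨ j < i + q + 2 := by omega
  · rw [jumpCoeff_eq_zero (q := q) (i := i) (by omega), mul_zero, zero_add,
      jumpCoeff_succ_last_knot hj]
  exact jumpCoeff_succ_inner_knot hj hij hjq t

end jumpCoeff

theorem bspline_zero_eventuallyEq_of_isSimpleKnotIn {U : ℕ → ℝ} {j i : ℕ}
    (hj : IsSimpleKnotIn U j (Finset.Icc i (i + 1))) :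
    ∃ f : ℝ → ℝ, ContDiff ℝ ∞ f ∧
      bspline U 0 i =ᶠ[𝓝 (U j)] fun t => f t + jumpCoeff U j 0 i * truncPow (U j) 0 t := by
  have hmem : ∀ {k}, i ≤ k → k ≤ i + 1 → k ∈ Finset.Icc i (i + 1) :=
    fun h₁ h₂ => Finset.mem_Icc.2 ⟨h₁, h₂⟩
  rcases eq_or_ne j i with rfl | hji
  · have hlt := (hj (j + 1) (hmem (by omega) le_rfl)).2 (by omega)
    have hc : jumpCoeff U j 0 j = 1 := by
      rw [jumpCoeff, if_pos (hmem le_rfl (by omega)),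
        show (Finset.Icc j (j + 0 + 1)).erase j = {j + 1} by
          ext; simp only [Finset.mem_erase, Finset.mem_Icc, Finset.mem_singleton]; omega,
        Finset.prod_singleton, div_self (sub_ne_zero.2 hlt.ne')]
    refine ⟨fun _ => 0, contDiff_const, ?_⟩
    filter_upwards [gt_mem_nhds hlt] with t ht
    simp [bspline_zero, truncPow, hc, ht]
  rcases eq_or_ne j (i + 1) with rfl | hji₁
  · have hlt := (hj i (hmem le_rfl (by omega))).1 (by omega)
    have hc : jumpCoeff U (i + 1) 0 i = -1 := by
      rw [jumpCoeff, if_pos (hmem (by omega) le_rfl),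
        show (Finset.Icc i (i + 0 + 1)).erase (i + 1) = {i} by
          ext; simp only [Finset.mem_erase, Finset.mem_Icc, Finset.mem_singleton]; omega,
        Finset.prod_singleton, div_eq_iff (sub_ne_zero.2 hlt.ne)]
      ring
    refine ⟨fun _ => 1, contDiff_const, ?_⟩
    filter_upwards [lt_mem_nhds hlt] with t ht
    by_cases h : U (i + 1) ≤ t <;> simp [bspline_zero, truncPow, hc, ht.le, h]
  have hne : ∀ k ∈ Finset.Icc i (i + 0 + 1), U k ≠ U j := fun k hk =>
    hj.ne hk (by rw [Finset.mem_Icc] at hk; omega)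
  obtain ⟨f, hf, hB⟩ := bspline_eventuallyEq_of_forall_ne (q := 0) hne
  refine ⟨f, hf, hB.trans (.of_forall fun t => ?_)⟩
  simp only [jumpCoeff_eq_zero (q := 0) (by omega : j < i ∨ i + 0 + 1 < j), zero_mul, add_zero]

theorem bspline_eventuallyEq_of_isSimpleKnotIn {U : ℕ → ℝ} {j q i : ℕ}
    (hj : IsSimpleKnotIn U j (Finset.Icc i (i + q + 1))) :
    ∃ f : ℝ → ℝ, ContDiff ℝ ∞ f ∧
      bspline U q i =ᶠ[𝓝 (U j)] fun t => f t + jumpCoeff U j q i * truncPow (U j) q t := by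
  induction q generalizing i with
  | zero => exact bspline_zero_eventuallyEq_of_isSimpleKnotIn hj
  | succ q ih =>
    obtain ⟨f₁, hf₁, h₁⟩ := ih (hj.mono (Finset.Icc_subset_Icc le_rfl (by omega)))
    obtain ⟨f₂, hf₂, h₂⟩ := ih (i := i + 1) (hj.mono (Finset.Icc_subset_Icc (by omega) (by omega)))
    refine ⟨fun t => (t - U i) / (U (i + q + 1) - U i) * f₁ t +
      (U (i + q + 2) - t) / (U (i + q + 2) - U (i + 1)) * f₂ t, by fun_prop,
      (bspline_succ_eventuallyEq h₁ h₂).trans (.of_forall fun t => ?_)⟩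
    dsimp only
    rw [truncPow_succ]
    linear_combination truncPow (U j) q t * jumpCoeff_succ hj t

theorem isSimpleKnotIn_of_mem_Ioo {U : ℕ → ℝ} {p l j : ℕ}
    (hU : ∀ j, 1 ≤ j → j ≤ l → U j ≤ U (j + 1))
    (hsimple : ∀ j, p + 1 ≤ j → j ≤ l - p → U j < U (j + 1)) (hpl : p ≤ l)
    (hj : j ∈ Finset.Icc 1 (l + 1)) (hx : U j ∈ Set.Ioo (U (p + 1)) (U (l - p + 1))) :
    IsSimpleKnotIn U j (Finset.Icc 1 (l + 1)) := by
  have hmono : MonotoneOn U (Set.Icc 1 (l + 1)) :=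
    monotoneOn_of_le_succ Set.ordConnected_Icc fun k _ hk hk₁ => by
      simp only [Order.succ_eq_add_one, Set.mem_Icc] at hk hk₁ ⊢
      exact hU k hk.1 (by omega)
  rw [Finset.mem_Icc] at hj
  have hpj : p + 1 < j := by
    by_contra! h
    exact hx.1.not_ge (hmono ⟨hj.1, hj.2⟩ ⟨by omega, by omega⟩ h)
  have hjl : j < l - p + 1 := by
    by_contra! h
    exact hx.2.not_ge (hmono ⟨by omega, by omega⟩ ⟨hj.1, hj.2⟩ h)
  intro k hk
  rw [Finset.mem_Icc] at hk
  obtain ⟨j, rfl⟩ : ∃ j', j = j' + 1 := ⟨j - 1, by omega⟩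
  constructor
  · intro hkj
    exact (hmono ⟨hk.1, by omega⟩ ⟨by omega, by omega⟩ (by omega)).trans_lt
      (hsimple j (by omega) (by omega))
  · intro hjk
    exact (hsimple (j + 1) (by omega) (by omega)).trans_le
      (hmono ⟨by omega, by omega⟩ ⟨by omega, hk.2⟩ (by omega))

theorem bspline_smoothness_simple_knots (p l : ℕ) (hp : 1 ≤ p) (U : ℕ → ℝ)
    (hU : ∀ j, 1 ≤ j → j ≤ l → U j ≤ U (j + 1))
    (hsimple : ∀ j, p + 1 ≤ j → j ≤ l - p → U j < U (j + 1))
    (i : ℕ) (hi : 1 ≤ i) (hil : i ≤ l - p) :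
    ContDiffOn ℝ (p - 1 : ℕ) (bspline U p i)
      (Set.Ioo (U (p + 1)) (U (l - p + 1))) := by
  intro x hx
  refine ContDiffAt.contDiffWithinAt ?_
  have hsupp : Finset.Icc i (i + p + 1) ⊆ Finset.Icc 1 (l + 1) :=
    Finset.Icc_subset_Icc hi (by omega)
  by_cases hknot : ∃ j ∈ Finset.Icc i (i + p + 1), U j = x
  · obtain ⟨j, hj, rfl⟩ := hknot
    have hsimpleKnot := (isSimpleKnotIn_of_mem_Ioo hU hsimple (by omega) (hsupp hj) hx).mono hsupp
    obtain ⟨f, hf, hB⟩ := bspline_eventuallyEq_of_isSimpleKnotIn hsimpleKnot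
    have htrunc := contDiff_truncPow (U j) (p - 1)
    rw [Nat.sub_add_cancel hp] at htrunc
    exact ((contDiff_infty.1 hf (p - 1)).add
      (contDiff_const.mul htrunc)).contDiffAt.congr_of_eventuallyEq hB
  · push Not at hknot
    obtain ⟨f, hf, hB⟩ := bspline_eventuallyEq_of_forall_ne hknot
    exact (contDiff_infty.1 hf (p - 1)).contDiffAt.congr_of_eventuallyEq hB
end
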